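/- Let Λ(λ) = lim_{n→∞} (1/n) log 𝔼[e^{λ·X_n}] (which exists for every λ ∈ ℝ^d) and let Λ*(x) = sup_{λ∈ℝ^d} (λ·x − Λ(λ)) be its convex conjugate. Then for every closed set F ⊆ ℝ^d: limsup_{n→∞} (1/n) log ℙ(X_n/n ∈ F) ≤ −inf_{x∈F} Λ*(x). -/

import Mathlib

open MeasureTheory ProbabilityTheory Filter
open scoped ENNReal

noncomputable section

/-- The natural embedding of the lattice `ℤ^d` into Euclidean space `ℝ^d`. -/
def emb (d : ℕ) (z : Fin d → ℤ) : EuclideanSpace ℝ (Fin d) := WithLp.toLp 2 (fun i => (z i : ℝ))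

/-- A finite family `u 0, …, u (m-1)` of lattice vectors is *nice* if for every nonzero
direction `l ∈ ℝ^d` there is some `i` with `l · u i > 0`. -/
def IsNice (d m : ℕ) (u : Fin m → Fin d → ℤ) : Prop :=
  ∀ l : EuclideanSpace ℝ (Fin d), l ≠ 0 → ∃ i : Fin m, 0 < (inner ℝ l (emb d (u i)) : ℝ)

/-- A stationary `ℤ^d`-valued random field `η` on a probability space `(Ω, P)`, with bounded
steps (i), finite-range dependence of range `M` (ii), and the ellipticity condition (iii)
with respect to a nice set of vectors `u 0, …, u (m-1)`. -/
structure DWRE (d : ℕ) (Ω : Type) [MeasurableSpace Ω] where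
  P : Measure Ω
  isProb : IsProbabilityMeasure P
  η : (Fin d → ℤ) → Ω → (Fin d → ℤ)
  meas_η : ∀ z, Measurable (η z)
  stationary : ∀ y : Fin d → ℤ,
    Measure.map (fun ω => fun z => η (z + y) ω) P = Measure.map (fun ω => fun z => η z ω) P
  L : ℝ
  L_pos : 0 < L
  bounded : ∀ z : Fin d → ℤ, ∀ᵐ ω ∂P, ‖emb d (η z ω)‖ ≤ L
  M : ℝ
  M_pos : 0 < M
  finiteRange : ∀ z : Fin d → ℤ,
    Indep (MeasurableSpace.comap (η z) inferInstance)
      (⨆ w ∈ {w : Fin d → ℤ | M < dist (emb d w) (emb d z)},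
        MeasurableSpace.comap (η w) inferInstance) P
  m : ℕ
  u : Fin m → Fin d → ℤ
  nice : IsNice d m u
  c : ℝ
  c_pos : 0 < c
  ellipticity : ∀ (z : Fin d → ℤ) (i : Fin m), ∀ᵐ ω ∂P,
    c < condExp
      (⨆ w ∈ {w : Fin d → ℤ | w ≠ z ∧ dist (emb d w) (emb d z) ≤ M},
        MeasurableSpace.comap (η w) inferInstance) P
      (Set.indicator {ω' | η z ω' = u i} (fun _ => (1 : ℝ))) ω

attribute [instance] DWRE.isProb

namespace DWRE

variable {d : ℕ} {Ω : Type} [MeasurableSpace Ω]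

/-- The deterministic walk in the random environment: `X 0 = 0`, `X (n+1) = X n + η (X n)`. -/
def walk (E : DWRE d Ω) : ℕ → Ω → Fin d → ℤ
  | 0, _ => 0
  | n + 1, ω => walk E n ω + E.η (walk E n ω) ω

/-- The σ-algebra generated by the variables `η z` for `z ∉ S` within distance `M` of `S`. -/
def Fnear (E : DWRE d Ω) (S : Set (Fin d → ℤ)) : MeasurableSpace Ω :=
  ⨆ w ∈ {w : Fin d → ℤ | w ∉ S ∧ ∃ y ∈ S, dist (emb d w) (emb d y) ≤ E.M},
    MeasurableSpace.comap (E.η w) inferInstance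

/-- The hitting time `T_u = inf {n : X n · l ≥ u}` (with value `⊤` if there is no such `n`). -/
def hitT (E : DWRE d Ω) (l : EuclideanSpace ℝ (Fin d)) (u : ℝ) (ω : Ω) : ℕ∞ :=
  sInf {t : ℕ∞ | ∃ n : ℕ, t = (n : ℕ∞) ∧ u ≤ (inner ℝ l (emb d (E.walk n ω)) : ℝ)}

/-- `D_1`, the time of the first jump of the walk over the hyperplane through the origin
orthogonal to `l`, in the direction of `l`. -/
def D1 (E : DWRE d Ω) (l : EuclideanSpace ℝ (Fin d)) (ω : Ω) : ℕ∞ :=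
  sInf {t : ℕ∞ | ∃ n : ℕ, t = (n : ℕ∞) ∧ 1 ≤ n ∧
    (inner ℝ l (emb d (E.walk (n - 1) ω)) : ℝ) < 0 ∧ 0 ≤ (inner ℝ l (emb d (E.walk n ω)) : ℝ)}

/-- `log ℙ(A)`, with `log 0 = -∞`, as an extended real number. -/
def plog (E : DWRE d Ω) (A : Set Ω) : EReal := ENNReal.log (E.P A)

/-- The sequence `n ↦ (1/n) log ℙ(A n)`, as extended real numbers. -/
def rate (E : DWRE d Ω) (A : ℕ → Set Ω) (n : ℕ) : EReal :=
  (((n : ℝ)⁻¹ : ℝ) : EReal) * E.plog (A n)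

/-- `T ≤ x` for an extended natural time `T` and a real bound `x` (in particular `T < ∞`). -/
def timeLE (t : ℕ∞) (x : ℝ) : Prop := ∃ n : ℕ, t = (n : ℕ∞) ∧ (n : ℝ) ≤ x

/-- The sequence `n ↦ (1/n) log 𝔼[exp (λ · X n)]`. -/
def mgfRate (E : DWRE d Ω) (lam : EuclideanSpace ℝ (Fin d)) (n : ℕ) : EReal :=
  (((n : ℝ)⁻¹ * Real.log (∫ ω, Real.exp ((inner ℝ lam (emb d (E.walk n ω)) : ℝ)) ∂E.P) : ℝ) : EReal)

/-- Convexity for `EReal`-valued functions on `ℝ^d`. -/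
def ConvexE {d : ℕ} (f : EuclideanSpace ℝ (Fin d) → EReal) : Prop :=
  ∀ x y : EuclideanSpace ℝ (Fin d), ∀ a b : ℝ, 0 ≤ a → 0 ≤ b → a + b = 1 →
    f (a • x + b • y) ≤ (a : EReal) * f x + (b : EReal) * f y

/-- Concavity for `EReal`-valued functions on `(0, ∞)`. -/
def ConcavePosE (γ : ℝ → EReal) : Prop :=
  ∀ k₁ k₂ : ℝ, 0 < k₁ → 0 < k₂ → ∀ a b : ℝ, 0 ≤ a → 0 ≤ b → a + b = 1 →
    (a : EReal) * γ k₁ + (b : EReal) * γ k₂ ≤ γ (a * k₁ + b * k₂)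

/-- The convex conjugate `Λ*(x) = sup_λ (λ·x − Λ(λ))` of an `EReal`-valued function on `ℝ^d`. -/
def conj {d : ℕ} (Λ : EuclideanSpace ℝ (Fin d) → EReal) (x : EuclideanSpace ℝ (Fin d)) : EReal :=
  ⨆ lam : EuclideanSpace ℝ (Fin d), (((inner ℝ lam x : ℝ)) : EReal) - Λ lam

end DWRE

open DWRE

variable {d : ℕ} {Ω : Type} [MeasurableSpace Ω]

/-!
The steps of the walk have length at most `L`, so `X_n / n` stays in the closed ball of radius
`L` and only the compact set `K = F ∩ closedBall 0 L` matters. Fix `J < inf_F Λ*`. For `x ∈ K`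
choose `λ` with `J < λ·x − Λ(λ)`; the exponential Chebyshev inequality
`ℙ(λ·X_n ≥ n a) ≤ e^{-na} 𝔼[e^{λ·X_n}] = e^{-na + n Λ(λ) + o(n)}`, applied with
`a = λ·x − δ‖λ‖`, gives `ℙ(X_n/n ∈ B(x, δ)) ≤ e^{-nJ}` for small `δ` and large `n`.
Finitely many of these balls cover `K`, so `ℙ(X_n/n ∈ F) ≤ N e^{-nJ}` eventually, and
`limsup (1/n) log ℙ(X_n/n ∈ F) ≤ -J`.
-/

open Metric Topology
open scoped RealInnerProductSpace

section LargeDeviations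

variable {α E : Type*} [MeasurableSpace α] {μ : Measure α} [NormedAddCommGroup E]
  [InnerProductSpace ℝ E]

lemma inner_sub_mul_norm_le_of_mem_ball {l x y : E} {δ : ℝ} (hy : y ∈ ball x δ) :
    ⟪l, x⟫ - δ * ‖l‖ ≤ ⟪l, y⟫ := by
  have hyx : ‖l‖ * ‖y - x‖ ≤ δ * ‖l‖ := by
    rw [mul_comm, ← dist_eq_norm]
    exact mul_le_mul_of_nonneg_right (mem_ball.1 hy).le (norm_nonneg l)
  have := neg_abs_le ⟪l, y - x⟫
  have := abs_real_inner_le_norm l (y - x)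
  rw [inner_sub_right] at *
  linarith

lemma integrable_exp_inner_of_ae_norm_le [IsFiniteMeasure μ] {Y : α → E}
    (hY : AEStronglyMeasurable Y μ) {R : ℝ} (hR : ∀ᵐ ω ∂μ, ‖Y ω‖ ≤ R) (l : E) :
    Integrable (fun ω => Real.exp ⟪l, Y ω⟫) μ := by
  refine .of_bound (Real.continuous_exp.comp_aestronglyMeasurable
    (aestronglyMeasurable_const.inner hY)) (Real.exp (‖l‖ * R)) ?_
  filter_upwards [hR] with ω hω
  rw [Real.norm_eq_abs, abs_of_pos (Real.exp_pos _), Real.exp_le_exp]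
  exact (real_inner_le_norm l (Y ω)).trans (mul_le_mul_of_nonneg_left hω (norm_nonneg l))

lemma measure_le_inner_le_ofReal_exp_mul_integral [IsFiniteMeasure μ] {Y : α → E} {l : E} (a : ℝ)
    (hint : Integrable (fun ω => Real.exp ⟪l, Y ω⟫) μ) :
    μ {ω | a ≤ ⟪l, Y ω⟫} ≤ ENNReal.ofReal (Real.exp (-a) * ∫ ω, Real.exp ⟪l, Y ω⟫ ∂μ) := by
  have h := measure_ge_le_exp_mul_mgf (X := fun ω => ⟪l, Y ω⟫) a zero_le_one
    (by simpa only [one_mul] using hint)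
  simp only [mgf, one_mul, neg_mul] at h
  rw [← ofReal_measureReal]
  exact ENNReal.ofReal_le_ofReal h

lemma exists_ball_eventually_measure_le [IsProbabilityMeasure μ] {Y : ℕ → α → E} {l : E}
    {Λl : EReal} (hint : ∀ n, Integrable (fun ω => Real.exp ⟪l, Y n ω⟫) μ)
    (hΛ : Tendsto (fun n : ℕ =>
      (((n : ℝ)⁻¹ * Real.log (∫ ω, Real.exp ⟪l, Y n ω⟫ ∂μ) : ℝ) : EReal)) atTop (𝓝 Λl))
    {x : E} {J : ℝ} (hJ : (J : EReal) < ⟪l, x⟫ - Λl) :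
    ∃ δ > 0, ∀ᶠ n : ℕ in atTop,
      μ {ω | (n : ℝ)⁻¹ • Y n ω ∈ ball x δ} ≤ ENNReal.ofReal (Real.exp (-(n * J))) := by
  have hΛJ : Λl < ((⟪l, x⟫ - J : ℝ) : EReal) := by
    rw [EReal.coe_sub, EReal.lt_sub_iff_add_lt (.inl (EReal.coe_ne_bot J))
      (.inl (EReal.coe_ne_top J)), add_comm]
    exact EReal.add_lt_of_lt_sub hJ
  obtain ⟨q, hΛq, hqJ⟩ := EReal.lt_iff_exists_real_btwn.1 hΛJ
  have hqJ : q < ⟪l, x⟫ - J := EReal.coe_lt_coe_iff.1 hqJ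
  set δ := (⟪l, x⟫ - J - q) / (‖l‖ + 1)
  have hδ : 0 < δ := div_pos (by linarith) (by positivity)
  have hδl : δ * ‖l‖ ≤ ⟪l, x⟫ - J - q := by
    rw [div_mul_eq_mul_div, div_le_iff₀ (by positivity)]
    nlinarith [norm_nonneg l]
  refine ⟨δ, hδ, ?_⟩
  filter_upwards [eventually_gt_atTop 0, hΛ.eventually (gt_mem_nhds hΛq)] with n hn0 hnq
  have hn : (0 : ℝ) < n := Nat.cast_pos.2 hn0
  set I := ∫ ω, Real.exp ⟪l, Y n ω⟫ ∂μ
  have hI : 0 < I := by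
    simpa only [mgf, one_mul] using
      mgf_pos (X := fun ω => ⟪l, Y n ω⟫) (μ := μ) (t := 1) (by simpa only [one_mul] using hint n)
  have hIq : I ≤ Real.exp (n * q) := by
    rw [← Real.log_le_iff_le_exp hI, ← inv_mul_le_iff₀ hn]
    exact_mod_cast hnq.le
  have hsub : {ω | (n : ℝ)⁻¹ • Y n ω ∈ ball x δ} ⊆ {ω | n * (⟪l, x⟫ - δ * ‖l‖) ≤ ⟪l, Y n ω⟫} := by
    intro ω hω
    have := inner_sub_mul_norm_le_of_mem_ball (l := l) hω
    rw [real_inner_smul_right, ← div_eq_inv_mul, le_div_iff₀ hn] at this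
    rwa [mul_comm] at this
  calc μ {ω | (n : ℝ)⁻¹ • Y n ω ∈ ball x δ}
      ≤ μ {ω | n * (⟪l, x⟫ - δ * ‖l‖) ≤ ⟪l, Y n ω⟫} := measure_mono hsub
    _ ≤ ENNReal.ofReal (Real.exp (-(n * (⟪l, x⟫ - δ * ‖l‖))) * I) :=
      measure_le_inner_le_ofReal_exp_mul_integral _ (hint n)
    _ ≤ ENNReal.ofReal (Real.exp (-(n * J))) := by
      refine ENNReal.ofReal_le_ofReal ?_
      calc Real.exp (-(n * (⟪l, x⟫ - δ * ‖l‖))) * I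
          ≤ Real.exp (-(n * (⟪l, x⟫ - δ * ‖l‖))) * Real.exp (n * q) := by gcongr
        _ ≤ Real.exp (-(n * J)) := by
          rw [← Real.exp_add, Real.exp_le_exp]
          nlinarith

lemma IsCompact.exists_eventually_measure_preimage_le {ι X : Type*} [TopologicalSpace X]
    {K : Set X} (hK : IsCompact K) {p : Filter ι} {g : ι → α → X} {b : ι → ℝ≥0∞}
    (h : ∀ x ∈ K, ∃ U ∈ 𝓝 x, ∀ᶠ i in p, μ (g i ⁻¹' U) ≤ b i) :
    ∃ N : ℕ, ∀ᶠ i in p, μ (g i ⁻¹' K) ≤ N * b i := by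
  choose! U hU hUb using h
  obtain ⟨t, htK, hKt⟩ := hK.elim_nhds_subcover U hU
  refine ⟨t.card, ?_⟩
  filter_upwards [(eventually_all_finset t).2 fun x hx => hUb x (htK x hx)] with i hi
  calc μ (g i ⁻¹' K) ≤ μ (⋃ x ∈ t, g i ⁻¹' U x) := by
        refine measure_mono ?_
        simpa only [Set.preimage_iUnion] using Set.preimage_mono (f := g i) hKt
    _ ≤ ∑ x ∈ t, μ (g i ⁻¹' U x) := measure_biUnion_finset_le _ _
    _ ≤ ∑ _x ∈ t, b i := Finset.sum_le_sum hi
    _ = t.card * b i := by rw [Finset.sum_const, nsmul_eq_mul]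

lemma limsup_inv_mul_log_le_neg {a : ℕ → ℝ≥0∞} {C J : ℝ} (hC : 0 < C)
    (h : ∀ᶠ n : ℕ in atTop, a n ≤ ENNReal.ofReal (C * Real.exp (-(n * J)))) :
    limsup (fun n : ℕ => (((n : ℝ)⁻¹ : ℝ) : EReal) * ENNReal.log (a n)) atTop ≤ -(J : EReal) := by
  have hlim : Tendsto (fun n : ℕ => ((Real.log C / n - J : ℝ) : EReal)) atTop (𝓝 (-J : ℝ)) :=
    EReal.tendsto_coe.2 <| by
      simpa only [zero_sub] using (tendsto_const_div_atTop_nhds_zero_nat (Real.log C)).sub_const J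
  refine (limsup_le_limsup ?_).trans hlim.limsup_eq.le
  filter_upwards [h, eventually_gt_atTop 0] with n hn hn0
  have hlog : ENNReal.log (a n) ≤ ((Real.log C - n * J : ℝ) : EReal) := by
    refine (ENNReal.log_monotone hn).trans_eq ?_
    rw [ENNReal.log_ofReal_of_pos (by positivity), Real.log_mul hC.ne' (Real.exp_ne_zero _),
      Real.log_exp, sub_eq_add_neg]
  calc (((n : ℝ)⁻¹ : ℝ) : EReal) * ENNReal.log (a n)
      ≤ (((n : ℝ)⁻¹ : ℝ) : EReal) * ((Real.log C - n * J : ℝ) : EReal) :=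
        mul_le_mul_of_nonneg_left hlog (by positivity)
    _ = ((Real.log C / n - J : ℝ) : EReal) := by
        rw [← EReal.coe_mul]
        congr 1
        field_simp

theorem limsup_inv_mul_log_measure_le_neg_iInf_conj [IsProbabilityMeasure μ]
    {Y : ℕ → α → EuclideanSpace ℝ (Fin d)} (hY : ∀ n, AEStronglyMeasurable (Y n) μ) {R : ℝ}
    (hR : ∀ n : ℕ, ∀ᵐ ω ∂μ, ‖Y n ω‖ ≤ n * R) {Λ : EuclideanSpace ℝ (Fin d) → EReal}
    (hΛ : ∀ l, Tendsto (fun n : ℕ =>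
      (((n : ℝ)⁻¹ * Real.log (∫ ω, Real.exp ⟪l, Y n ω⟫ ∂μ) : ℝ) : EReal)) atTop (𝓝 (Λ l)))
    {F : Set (EuclideanSpace ℝ (Fin d))} (hF : IsClosed F) :
    limsup (fun n : ℕ => (((n : ℝ)⁻¹ : ℝ) : EReal) *
      ENNReal.log (μ {ω | (n : ℝ)⁻¹ • Y n ω ∈ F})) atTop ≤ -⨅ x ∈ F, conj Λ x := by
  refine EReal.le_of_forall_lt_iff_le.1 fun z hz => ?_
  obtain ⟨J, rfl⟩ : ∃ J : ℝ, z = -J := ⟨-z, (neg_neg z).symm⟩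
  have hJ : (J : EReal) < ⨅ x ∈ F, conj Λ x := by
    rwa [EReal.coe_neg, EReal.neg_lt_neg_iff] at hz
  have hK : IsCompact (F ∩ closedBall 0 R) := (isCompact_closedBall 0 R).inter_left hF
  have hball : ∀ x ∈ F ∩ closedBall 0 R, ∃ U ∈ 𝓝 x, ∀ᶠ n : ℕ in atTop,
      μ ((fun ω => (n : ℝ)⁻¹ • Y n ω) ⁻¹' U) ≤ ENNReal.ofReal (Real.exp (-(n * J))) := by
    intro x hx
    obtain ⟨l, hl⟩ := lt_iSup_iff.1 (hJ.trans_le (iInf₂_le x hx.1))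
    obtain ⟨δ, hδ, hδμ⟩ := exists_ball_eventually_measure_le
      (fun n => integrable_exp_inner_of_ae_norm_le (hY n) (hR n) l) (hΛ l) hl
    exact ⟨ball x δ, ball_mem_nhds x hδ, hδμ⟩
  obtain ⟨N, hN⟩ := hK.exists_eventually_measure_preimage_le hball
  have hC : (0 : ℝ) < N + 1 := by positivity
  refine (limsup_inv_mul_log_le_neg hC ?_).trans_eq (EReal.coe_neg J).symm
  filter_upwards [hN, eventually_gt_atTop 0] with n hn hn0
  have hFK : ∀ᵐ ω ∂μ, (n : ℝ)⁻¹ • Y n ω ∈ F → (n : ℝ)⁻¹ • Y n ω ∈ F ∩ closedBall 0 R := by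
    filter_upwards [hR n] with ω hω hωF
    refine ⟨hωF, ?_⟩
    rw [mem_closedBall_zero_iff, norm_smul, norm_inv, Real.norm_natCast,
      inv_mul_le_iff₀ (by positivity)]
    exact hω
  calc μ {ω | (n : ℝ)⁻¹ • Y n ω ∈ F}
      ≤ μ ((fun ω => (n : ℝ)⁻¹ • Y n ω) ⁻¹' (F ∩ closedBall 0 R)) := measure_mono_ae hFK
    _ ≤ N * ENNReal.ofReal (Real.exp (-(n * J))) := hn
    _ ≤ ENNReal.ofReal ((N + 1) * Real.exp (-(n * J))) := by
      rw [ENNReal.ofReal_mul hC.le]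
      gcongr
      rw [← ENNReal.ofReal_natCast]
      exact ENNReal.ofReal_le_ofReal (by linarith)

end LargeDeviations

@[simp]
lemma emb_zero : emb d 0 = 0 := by
  ext i
  simp [emb]

@[simp]
lemma emb_add (a b : Fin d → ℤ) : emb d (a + b) = emb d a + emb d b := by
  ext i
  simp [emb]

namespace DWRE

variable (E : DWRE d Ω)

lemma measurable_walk (n : ℕ) : Measurable (E.walk n) := by
  induction n with
  | zero => exact measurable_const
  | succ n ih =>
    have hstep : Measurable fun p : Ω × (Fin d → ℤ) => p.2 + E.η p.2 p.1 :=
      measurable_from_prod_countable_left fun z =>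
        (measurable_of_countable (z + ·)).comp (E.meas_η z)
    exact hstep.comp (measurable_id.prodMk ih)

lemma ae_norm_emb_walk_le (n : ℕ) : ∀ᵐ ω ∂E.P, ‖emb d (E.walk n ω)‖ ≤ n * E.L := by
  filter_upwards [ae_all_iff.2 E.bounded] with ω hω
  induction n with
  | zero => simp [walk]
  | succ n ih =>
    calc ‖emb d (E.walk (n + 1) ω)‖
        ≤ ‖emb d (E.walk n ω)‖ + ‖emb d (E.η (E.walk n ω) ω)‖ := by
          rw [walk, emb_add]
          exact norm_add_le _ _
      _ ≤ (n + 1 : ℕ) * E.L := by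
          push_cast
          linarith [hω (E.walk n ω)]

end DWRE

theorem ld_upper_bound_general (E : DWRE d Ω)
    (Λ : EuclideanSpace ℝ (Fin d) → EReal)
    (hΛ : ∀ lam : EuclideanSpace ℝ (Fin d),
      Filter.Tendsto (E.mgfRate lam) Filter.atTop (nhds (Λ lam))) :
    ∀ F : Set (EuclideanSpace ℝ (Fin d)), IsClosed F →
      Filter.limsup
          (E.rate fun n => {ω | (n : ℝ)⁻¹ • emb d (E.walk n ω) ∈ F}) Filter.atTop ≤
        -(⨅ x ∈ F, conj Λ x) := fun _ hF =>
  limsup_inv_mul_log_measure_le_neg_iInf_conj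
    (fun n => ((measurable_of_countable (emb d)).comp (E.measurable_walk n)).aestronglyMeasurable)
    E.ae_norm_emb_walk_le hΛ hF

/-- upper large deviation bound, Theorem `mainmain_theorem`: for every
closed set `F`, `limsup (1/n) log ℙ(X_n/n ∈ F) ≤ − inf_{x ∈ F} Λ*(x)`. -/
theorem ld_upper_bound (hd : 0 < d) (E : DWRE d Ω)
    (Λ : EuclideanSpace ℝ (Fin d) → EReal)
    (hΛ : ∀ lam : EuclideanSpace ℝ (Fin d),
      Filter.Tendsto (E.mgfRate lam) Filter.atTop (nhds (Λ lam))) :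
    ∀ F : Set (EuclideanSpace ℝ (Fin d)), IsClosed F →
      Filter.limsup
          (E.rate fun n => {ω | (n : ℝ)⁻¹ • emb d (E.walk n ω) ∈ F}) Filter.atTop ≤
        -(⨅ x ∈ F, conj Λ x) :=
  ld_upper_bound_general E Λ hΛ
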